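/- arXiv:2503.01529 — 2 statements merged into one kernel-verified Lean document; each statement's English description precedes it below -/
import Mathlib

section
/- For all q*, q_k ∈ [0,1] with q* ≤ q_k and all valuations s, b̄, b̲ ∈ [0,1] with b̲ ≤ b̄, the difference of the strong-budget-balance gains from trade is bounded by the indicator of the in-between event: (b̄ − s)·𝟙(b̄ ≥ q*)·𝟙(s ≤ max{q*, b̲}) − (b̄ − s)·𝟙(b̄ ≥ q_k)·𝟙(s ≤ max{q_k, b̲}) ≤ 𝟙(q* ≤ b̄ < q_k). -/
/-! Once the buyer accepts both reserve prices (`q_k ≤ b̄`), raising the reserve from `q*` to `q_k`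
only adds trades, each with `s ≤ max q_k b̲ ≤ b̄`, i.e. with nonnegative gain; so the difference is
`≤ 0`. If the buyer rejects `q*` it rejects `q_k` too and the difference is `0`. In the remaining
event `q* ≤ b̄ < q_k` the difference is a single gain `b̄ - s ≤ 1`. -/

/-- The paper's `GFT(q)`. -/
noncomputable def sbbGFT (q s bbar blow : ℝ) : ℝ :=
  (bbar - s) * (if q ≤ bbar then 1 else 0) * (if s ≤ max q blow then 1 else 0)

lemma sbbGFT_eq_zero_of_lt {q s bbar blow : ℝ} (h : bbar < q) : sbbGFT q s bbar blow = 0 := by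
  simp [sbbGFT, not_le.mpr h]

lemma sbbGFT_le_one {q s bbar blow : ℝ} (hs : 0 ≤ s) (hbbar : bbar ≤ 1) :
    sbbGFT q s bbar blow ≤ 1 := by
  unfold sbbGFT
  split_ifs <;> linarith

lemma sbbGFT_mono_of_le {q q' s bbar blow : ℝ} (hq : q ≤ q') (hq' : q' ≤ bbar)
    (hbb : blow ≤ bbar) : sbbGFT q s bbar blow ≤ sbbGFT q' s bbar blow := by
  have hmax : max q blow ≤ max q' blow := max_le_max_right blow hq
  have hmax_le : max q' blow ≤ bbar := max_le hq' hbb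
  simp only [sbbGFT, if_pos (hq.trans hq'), if_pos hq', mul_one]
  split_ifs with h h' h' <;> linarith

theorem sbb_gft_difference_le_indicator_general
    (qstar qk s bbar blow : ℝ)
    (hle : qstar ≤ qk)
    (hs : s ∈ Set.Icc (0:ℝ) 1) (hbbar : bbar ∈ Set.Icc (0:ℝ) 1)
    (hbb : blow ≤ bbar) :
    (bbar - s) * (if qstar ≤ bbar then (1:ℝ) else 0)
        * (if s ≤ max qstar blow then (1:ℝ) else 0)
      - (bbar - s) * (if qk ≤ bbar then (1:ℝ) else 0)
        * (if s ≤ max qk blow then (1:ℝ) else 0)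
      ≤ (if qstar ≤ bbar ∧ bbar < qk then (1:ℝ) else 0) := by
  change sbbGFT qstar s bbar blow - sbbGFT qk s bbar blow ≤ _
  split_ifs with hmid
  · have hgain := sbbGFT_le_one (q := qstar) (blow := blow) hs.1 hbbar.2
    rw [sbbGFT_eq_zero_of_lt hmid.2]
    linarith
  · rcases lt_or_ge bbar qstar with hlow | hstar
    · rw [sbbGFT_eq_zero_of_lt hlow, sbbGFT_eq_zero_of_lt (hlow.trans_le hle), sub_zero]
    · have hk : qk ≤ bbar := not_lt.mp fun h => hmid ⟨hstar, h⟩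
      linarith [sbbGFT_mono_of_le (s := s) hle hk hbb]

/-- The difference of SBB gains from trade at reserve prices `q* ≤ q_k` is bounded by the
indicator of the event `q* ≤ b̄ < q_k`. -/
theorem sbb_gft_difference_le_indicator
    (qstar qk s bbar blow : ℝ)
    (hqstar : qstar ∈ Set.Icc (0:ℝ) 1) (hqk : qk ∈ Set.Icc (0:ℝ) 1)
    (hle : qstar ≤ qk)
    (hs : s ∈ Set.Icc (0:ℝ) 1) (hbbar : bbar ∈ Set.Icc (0:ℝ) 1)
    (hblow : blow ∈ Set.Icc (0:ℝ) 1) (hbb : blow ≤ bbar) :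
    (bbar - s) * (if qstar ≤ bbar then (1:ℝ) else 0)
        * (if s ≤ max qstar blow then (1:ℝ) else 0)
      - (bbar - s) * (if qk ≤ bbar then (1:ℝ) else 0)
        * (if s ≤ max qk blow then (1:ℝ) else 0)
      ≤ (if qstar ≤ bbar ∧ bbar < qk then (1:ℝ) else 0) :=
  sbb_gft_difference_le_indicator_general qstar qk s bbar blow hle hs hbbar hbb
end

section
/- Let (s, b̄) be a pair of [0,1]-valued random variables with s independent of b̄. Fix p*, q* ∈ [0,1] and suppose E[(b̄ − p*)·𝟙(b̄ ≥ q*)] ≥ 0. Then for any p_k with p* ≤ p_k ≤ p* + Δ, the expected gain from trade satisfies E[(b̄ − s)·𝟙(s ≤ p*)·𝟙(b̄ ≥ q*)] − E[(b̄ − s)·𝟙(s ≤ p_k)·𝟙(b̄ ≥ q*)] ≤ Δ. -/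
/-!
Raising the seller price from `p*` to `p_k` adds exactly the trades with `s ∈ (p*, p_k]` and
`b̄ ≥ q*`. Their gain `b̄ − s = (b̄ − p*) − (s − p*)` has, by independence, expectation
`P(p* < s ≤ p_k)·E[(b̄ − p*)·𝟙(b̄ ≥ q*)] − E[(s − p*)·𝟙(p* < s ≤ p_k)]·P(b̄ ≥ q*) ≥ 0 − Δ`.
-/

open MeasureTheory ProbabilityTheory

/-- The expected gain from trade `GFT(p, q)` at seller price `p` and buyer price `q`. -/
noncomputable def gft {Ω : Type*} [MeasurableSpace Ω] (μ : Measure Ω) (s b : Ω → ℝ)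
    (p q : ℝ) : ℝ :=
  ∫ ω, (b ω - s ω) * (if s ω ≤ p then (1:ℝ) else 0) * (if q ≤ b ω then (1:ℝ) else 0) ∂μ

namespace ProbabilityTheory.IndepFun

variable {Ω α β : Type*} [MeasurableSpace Ω] [MeasurableSpace α] [MeasurableSpace β]
  {μ : Measure Ω} {X : Ω → α} {Y : Ω → β} {φ : α → ℝ} {ψ : β → ℝ}

lemma integral_comp_mul_comp_le [IsProbabilityMeasure μ] (hXY : IndepFun X Y μ)
    (hX : Measurable X) (hY : Measurable Y) (hφ : Measurable φ) (hψ : Measurable ψ) {a : ℝ}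
    (hφ0 : ∀ x, 0 ≤ φ x) (hφa : ∀ x, φ x ≤ a) (hψ0 : ∀ y, 0 ≤ ψ y) (hψ1 : ∀ y, ψ y ≤ 1) :
    ∫ ω, φ (X ω) * ψ (Y ω) ∂μ ≤ a := by
  rw [hXY.integral_fun_comp_mul_comp hX.aemeasurable hY.aemeasurable
    hφ.aestronglyMeasurable hψ.aestronglyMeasurable]
  have hEφ : ∫ ω, φ (X ω) ∂μ ≤ a := by
    simpa using integral_mono_of_nonneg (.of_forall fun ω => hφ0 (X ω))
      (integrable_const (μ := μ) a) (.of_forall fun ω => hφa (X ω))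
  have hEψ : ∫ ω, ψ (Y ω) ∂μ ≤ 1 := by
    simpa using integral_mono_of_nonneg (.of_forall fun ω => hψ0 (Y ω))
      (integrable_const (μ := μ) 1) (.of_forall fun ω => hψ1 (Y ω))
  have hEφ0 : 0 ≤ ∫ ω, φ (X ω) ∂μ := integral_nonneg fun ω => hφ0 (X ω)
  have hEψ0 : 0 ≤ ∫ ω, ψ (Y ω) ∂μ := integral_nonneg fun ω => hψ0 (Y ω)
  nlinarith

lemma integral_comp_mul_comp_nonneg (hXY : IndepFun X Y μ) (hX : Measurable X)
    (hY : Measurable Y) (hφ : Measurable φ) (hψ : Measurable ψ) (hφ0 : ∀ x, 0 ≤ φ x)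
    (hEψ : 0 ≤ ∫ ω, ψ (Y ω) ∂μ) :
    0 ≤ ∫ ω, φ (X ω) * ψ (Y ω) ∂μ := by
  rw [hXY.integral_fun_comp_mul_comp hX.aemeasurable hY.aemeasurable
    hφ.aestronglyMeasurable hψ.aestronglyMeasurable]
  exact mul_nonneg (integral_nonneg fun ω => hφ0 (X ω)) hEψ

end ProbabilityTheory.IndepFun

lemma integrable_of_mem_Icc {Ω : Type*} [MeasurableSpace Ω] {μ : Measure Ω} [IsFiniteMeasure μ]
    {f : Ω → ℝ} (hf : AEStronglyMeasurable f μ) {a c : ℝ} (h : ∀ ω, f ω ∈ Set.Icc a c) :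
    Integrable f μ :=
  .of_bound hf (max |a| |c|) (.of_forall fun ω => abs_le_max_abs_abs (h ω).1 (h ω).2)

section GainFromTrade

variable {Ω : Type*} [MeasurableSpace Ω] {μ : Measure Ω} {s b : Ω → ℝ}

lemma integrable_gft_integrand [IsFiniteMeasure μ] (hsm : Measurable s) (hbm : Measurable b)
    (hs01 : ∀ ω, s ω ∈ Set.Icc (0:ℝ) 1) (hb01 : ∀ ω, b ω ∈ Set.Icc (0:ℝ) 1) (p q : ℝ) :
    Integrable (fun ω => (b ω - s ω) * (if s ω ≤ p then (1:ℝ) else 0)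
      * (if q ≤ b ω then (1:ℝ) else 0)) μ := by
  have hI : Measurable fun ω => if s ω ≤ p then (1:ℝ) else 0 :=
    .ite (measurableSet_le hsm measurable_const) measurable_const measurable_const
  have hJ : Measurable fun ω => if q ≤ b ω then (1:ℝ) else 0 :=
    .ite (measurableSet_le measurable_const hbm) measurable_const measurable_const
  refine integrable_of_mem_Icc (by fun_prop) (a := -1) (c := 1) fun ω => ?_
  obtain ⟨hs0, hs1⟩ := hs01 ω
  obtain ⟨hb0, hb1⟩ := hb01 ω
  simp only [Set.mem_Icc]
  split_ifs <;> constructor <;> linarith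

lemma gft_sub_gft_eq [IsFiniteMeasure μ] (hsm : Measurable s) (hbm : Measurable b)
    (hs01 : ∀ ω, s ω ∈ Set.Icc (0:ℝ) 1) (hb01 : ∀ ω, b ω ∈ Set.Icc (0:ℝ) 1)
    {p p' : ℝ} (hp : p ≤ p') (q : ℝ) :
    gft μ s b p' q - gft μ s b p q = ∫ ω, (b ω - s ω)
      * (if s ω ∈ Set.Ioc p p' then (1:ℝ) else 0) * (if q ≤ b ω then (1:ℝ) else 0) ∂μ := by
  rw [gft, gft, ← integral_sub (integrable_gft_integrand hsm hbm hs01 hb01 p' q)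
    (integrable_gft_integrand hsm hbm hs01 hb01 p q)]
  congr 1 with ω
  by_cases hsp : s ω ≤ p
  · simp [hsp, hsp.trans hp, Set.mem_Ioc]
  · by_cases hsp' : s ω ≤ p' <;> simp [hsp, hsp', Set.mem_Ioc, lt_of_not_ge hsp]

lemma sub_le_integral_gain_Ioc [IsProbabilityMeasure μ] (hind : IndepFun s b μ)
    (hsm : Measurable s) (hbm : Measurable b) (hb01 : ∀ ω, b ω ∈ Set.Icc (0:ℝ) 1)
    {p p' q : ℝ} (hp : p ≤ p')
    (hpos : 0 ≤ ∫ ω, (b ω - p) * (if q ≤ b ω then (1:ℝ) else 0) ∂μ) :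
    p - p' ≤ ∫ ω, (b ω - s ω) * (if s ω ∈ Set.Ioc p p' then (1:ℝ) else 0)
      * (if q ≤ b ω then (1:ℝ) else 0) ∂μ := by
  set I : ℝ → ℝ := fun x => if x ∈ Set.Ioc p p' then 1 else 0
  set J : ℝ → ℝ := fun y => if q ≤ y then 1 else 0
  have hI : Measurable I := measurable_const.ite measurableSet_Ioc measurable_const
  have hJ : Measurable J :=
    measurable_const.ite (measurableSet_le measurable_const measurable_id) measurable_const
  have hI0 : ∀ x, 0 ≤ I x := fun x => by simp only [I]; split_ifs <;> simp
  have hJ01 : ∀ y, J y ∈ Set.Icc 0 1 := fun y => by simp only [J]; split_ifs <;> simp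
  have hprice : ∀ x, (x - p) * I x ∈ Set.Icc 0 (p' - p) := fun x => by
    simp only [I, Set.mem_Ioc, Set.mem_Icc]
    split_ifs with hx
    · constructor <;> linarith [hx.1, hx.2]
    · constructor <;> linarith
  have hsurplus_int : Integrable (fun ω => I (s ω) * ((b ω - p) * J (b ω))) μ := by
    refine integrable_of_mem_Icc (by fun_prop) (a := -(|p| + 1)) (c := |p| + 1) fun ω => ?_
    obtain ⟨hb0, hb1⟩ := hb01 ω
    simp only [I, J, Set.mem_Icc]
    split_ifs <;> constructor <;> linarith [le_abs_self p, neg_abs_le p]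
  have hprice_int : Integrable (fun ω => (s ω - p) * I (s ω) * J (b ω)) μ := by
    refine integrable_of_mem_Icc (by fun_prop) (a := 0) (c := p' - p) fun ω => ?_
    obtain ⟨hφ0, hφ1⟩ := hprice (s ω)
    obtain ⟨hJ0, hJ1⟩ := hJ01 (b ω)
    constructor <;> nlinarith
  have hsurplus_nonneg : 0 ≤ ∫ ω, I (s ω) * ((b ω - p) * J (b ω)) ∂μ :=
    hind.integral_comp_mul_comp_nonneg (ψ := fun y => (y - p) * J y) hsm hbm hI
      ((measurable_id.sub_const p).mul hJ) hI0 hpos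
  have hprice_le : ∫ ω, (s ω - p) * I (s ω) * J (b ω) ∂μ ≤ p' - p :=
    hind.integral_comp_mul_comp_le hsm hbm ((measurable_id.sub_const p).mul hI) hJ
      (fun x => (hprice x).1) (fun x => (hprice x).2) (fun y => (hJ01 y).1) (fun y => (hJ01 y).2)
  calc p - p' ≤ ∫ ω, I (s ω) * ((b ω - p) * J (b ω)) ∂μ
        - ∫ ω, (s ω - p) * I (s ω) * J (b ω) ∂μ := by linarith
    _ = _ := by
        rw [← integral_sub hsurplus_int hprice_int]
        congr 1 with ω
        ring

end GainFromTrade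

theorem gft_grid_approx_independent_general
    {Ω : Type*} [MeasurableSpace Ω] (μ : Measure Ω) [IsProbabilityMeasure μ]
    (s b : Ω → ℝ) (hsm : Measurable s) (hbm : Measurable b)
    (hs01 : ∀ ω, s ω ∈ Set.Icc (0:ℝ) 1) (hb01 : ∀ ω, b ω ∈ Set.Icc (0:ℝ) 1)
    (hind : ProbabilityTheory.IndepFun s b μ)
    (pstar qstar pk Δ : ℝ)
    (hpos : 0 ≤ ∫ ω, (b ω - pstar) * (if qstar ≤ b ω then (1:ℝ) else 0) ∂μ)
    (h1 : pstar ≤ pk) (h2 : pk ≤ pstar + Δ) :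
    (∫ ω, (b ω - s ω) * (if s ω ≤ pstar then (1:ℝ) else 0)
          * (if qstar ≤ b ω then (1:ℝ) else 0) ∂μ)
      - (∫ ω, (b ω - s ω) * (if s ω ≤ pk then (1:ℝ) else 0)
          * (if qstar ≤ b ω then (1:ℝ) else 0) ∂μ)
      ≤ Δ := by
  change gft μ s b pstar qstar - gft μ s b pk qstar ≤ Δ
  have hgain := gft_sub_gft_eq (μ := μ) hsm hbm hs01 hb01 h1 qstar
  linarith [sub_le_integral_gain_Ioc hind hsm hbm hb01 h1 hpos]

/-- Under independence of `s` and `b̄`, if `E[(b̄ − p*)·𝟙(b̄ ≥ q*)] ≥ 0` and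
`p* ≤ p_k ≤ p* + Δ`, then `GFT(p*, q*) − GFT(p_k, q*) ≤ Δ`. -/
theorem gft_grid_approx_independent
    {Ω : Type*} [MeasurableSpace Ω] (μ : Measure Ω) [IsProbabilityMeasure μ]
    (s b : Ω → ℝ) (hsm : Measurable s) (hbm : Measurable b)
    (hs01 : ∀ ω, s ω ∈ Set.Icc (0:ℝ) 1) (hb01 : ∀ ω, b ω ∈ Set.Icc (0:ℝ) 1)
    (hind : ProbabilityTheory.IndepFun s b μ)
    (pstar qstar pk Δ : ℝ)
    (hpstar : pstar ∈ Set.Icc (0:ℝ) 1) (hqstar : qstar ∈ Set.Icc (0:ℝ) 1)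
    (hpos : 0 ≤ ∫ ω, (b ω - pstar) * (if qstar ≤ b ω then (1:ℝ) else 0) ∂μ)
    (h1 : pstar ≤ pk) (h2 : pk ≤ pstar + Δ) :
    (∫ ω, (b ω - s ω) * (if s ω ≤ pstar then (1:ℝ) else 0)
          * (if qstar ≤ b ω then (1:ℝ) else 0) ∂μ)
      - (∫ ω, (b ω - s ω) * (if s ω ≤ pk then (1:ℝ) else 0)
          * (if qstar ≤ b ω then (1:ℝ) else 0) ∂μ)
      ≤ Δ :=
  gft_grid_approx_independent_general μ s b hsm hbm hs01 hb01 hind pstar qstar pk Δ hpos h1 h2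
end
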